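/- Let ω > 0, n ≥ 1, and let U_ω(t) be the operator on L¹(ℝⁿ) ∩ L²(ℝⁿ) given for t ≠ 0 by the Mehler-type formula (U_ω(t)u₀)(x) = e^{−inπ sgn(t)/4} |ω/(2π sinh(ωt))|^{n/2} ∫_{ℝⁿ} exp( (iω/sinh(ωt)) ( (|x|²+|y|²)/2 · cosh(ωt) − x·y ) ) u₀(y) dy. Then for every t ≠ 0 and every f ∈ L¹(ℝⁿ), ‖U_ω(t)f‖_{L^∞} ≤ (2π|t|)^{−n/2} ‖f‖_{L¹}. -/

import Mathlib

open Complex MeasureTheory RealInnerProductSpace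

/-- The Mehler-type propagator (1.8) for the repulsive harmonic oscillator. -/
noncomputable def mehlerRep (n : ℕ) (ω t : ℝ)
    (f : EuclideanSpace ℝ (Fin n) → ℂ) (x : EuclideanSpace ℝ (Fin n)) : ℂ :=
  Complex.exp (-(I * ((n : ℝ) * Real.pi * Real.sign t / 4 : ℝ)))
    * (|ω / (2 * Real.pi * Real.sinh (ω * t))| ^ ((n : ℝ) / 2) : ℝ)
    * ∫ y, Complex.exp (I * (ω / Real.sinh (ω * t)
          * ((‖x‖ ^ 2 + ‖y‖ ^ 2) / 2 * Real.cosh (ω * t) - ⟪x, y⟫) : ℝ))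
        * f y

/-- Dispersive estimate for the repulsive Mehler propagator: for `t ≠ 0` and
`f ∈ L¹`, `‖U_ω(t)f‖_{L^∞} ≤ (2π|t|)^{-n/2} ‖f‖_{L¹}`, uniformly in `ω`. -/
theorem mehler_dispersive (n : ℕ) (hn : 1 ≤ n) (ω t : ℝ) (hω : 0 < ω)
    (ht : t ≠ 0) (f : EuclideanSpace ℝ (Fin n) → ℂ)
    (hf : Integrable f) :
    ∀ x, ‖mehlerRep n ω t f x‖
      ≤ (2 * Real.pi * |t|) ^ (-((n : ℝ) / 2)) * ∫ y, ‖f y‖ := by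
  intro x
  have hπ : (0:ℝ) < Real.pi := Real.pi_pos
  have ht' : 0 < |t| := abs_pos.2 ht
  have h2πt : (0:ℝ) < 2 * Real.pi * |t| := by positivity
  -- norm of the phase factors is 1
  have hph : ‖Complex.exp (-(I * ((n : ℝ) * Real.pi * Real.sign t / 4 : ℝ)))‖ = 1 := by
    rw [show -(I * ((n : ℝ) * Real.pi * Real.sign t / 4 : ℝ))
        = ((-((n : ℝ) * Real.pi * Real.sign t / 4) : ℝ) : ℂ) * I by push_cast; ring,
      Complex.norm_exp_ofReal_mul_I]
  have hker : ∀ y : EuclideanSpace ℝ (Fin n),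
      ‖Complex.exp (I * (ω / Real.sinh (ω * t)
        * ((‖x‖ ^ 2 + ‖y‖ ^ 2) / 2 * Real.cosh (ω * t) - ⟪x, y⟫) : ℝ))‖ = 1 := by
    intro y
    rw [mul_comm, Complex.norm_exp_ofReal_mul_I]
  -- bound the integral
  have hint : ‖∫ y, Complex.exp (I * (ω / Real.sinh (ω * t)
        * ((‖x‖ ^ 2 + ‖y‖ ^ 2) / 2 * Real.cosh (ω * t) - ⟪x, y⟫) : ℝ)) * f y‖
      ≤ ∫ y, ‖f y‖ := by
    refine (norm_integral_le_integral_norm _).trans_eq ?_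
    congr 1
    funext y
    rw [norm_mul, hker y, one_mul]
  -- bound the prefactor
  have hsinh : ω * |t| ≤ |Real.sinh (ω * t)| := by
    rw [Real.abs_sinh]
    have : ω * |t| = |ω * t| := by rw [abs_mul, abs_of_pos hω]
    rw [this]
    exact Real.self_le_sinh_iff.2 (abs_nonneg _)
  have hpre : |ω / (2 * Real.pi * Real.sinh (ω * t))| ^ ((n : ℝ) / 2)
      ≤ (2 * Real.pi * |t|) ^ (-((n : ℝ) / 2)) := by
    rw [Real.rpow_neg h2πt.le, ← Real.inv_rpow h2πt.le]
    refine Real.rpow_le_rpow (abs_nonneg _) ?_ (by positivity)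
    have hs : (0:ℝ) < |Real.sinh (ω * t)| :=
      lt_of_lt_of_le (by positivity) hsinh
    rw [abs_div, abs_of_pos hω, abs_mul, abs_of_pos (by positivity : (0:ℝ) < 2 * Real.pi)]
    rw [div_le_iff₀ (by positivity), inv_mul_eq_div, le_div_iff₀ h2πt]
    nlinarith [mul_le_mul_of_nonneg_left hsinh (le_of_lt (by positivity : (0:ℝ) < 2 * Real.pi))]
  -- assemble
  unfold mehlerRep
  rw [norm_mul, norm_mul, hph, one_mul, Complex.norm_real, Real.norm_eq_abs,
    _root_.abs_of_nonneg (Real.rpow_nonneg (abs_nonneg _) _)]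
  have h0 : (0:ℝ) ≤ ∫ y, ‖f y‖ := integral_nonneg fun y => norm_nonneg _
  calc |ω / (2 * Real.pi * Real.sinh (ω * t))| ^ ((n : ℝ) / 2)
        * ‖∫ y, Complex.exp (I * (ω / Real.sinh (ω * t)
          * ((‖x‖ ^ 2 + ‖y‖ ^ 2) / 2 * Real.cosh (ω * t) - ⟪x, y⟫) : ℝ)) * f y‖
      ≤ |ω / (2 * Real.pi * Real.sinh (ω * t))| ^ ((n : ℝ) / 2) * ∫ y, ‖f y‖ :=
        mul_le_mul_of_nonneg_left hint (Real.rpow_nonneg (abs_nonneg _) _)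
    _ ≤ (2 * Real.pi * |t|) ^ (-((n : ℝ) / 2)) * ∫ y, ‖f y‖ :=
        mul_le_mul_of_nonneg_right hpre h0
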